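/- arXiv:math/0605587 — 2 statements merged into one kernel-verified Lean document; each statement's English description precedes it below -/
import Mathlib

section
/- Let G be a compact Lie group with Lie algebra 𝔤. The map Φ(V,c,V̄,c̄,X) = (V, c·𝔯(V̄)·c^{-1}, X) maps Z^{ℓ,1}_{YM}(G) surjectively onto X^{2ℓ,0}_{YM}(G) = {(W, X) ∈ G^{4ℓ} × 𝔤 | W ∈ (G_X)^{4ℓ}, 𝔪(W) = exp(X)} (identifying G^{2ℓ}×G^{2ℓ} with G^{4ℓ}). -/
/-!
Write `e = exp (X/2)`, so `e² = exp X`. For `z ∈ Z^{ℓ,1}_{YM}(G)` the defining equations give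
`𝔪(c 𝔯(V̄) c⁻¹) = c 𝔪(V̄)⁻¹ c⁻¹ = e (c c̄)⁻¹` and `𝔪(V) = e (c c̄)`; since `𝔪(V) ∈ G_X` commutes
with `e`, so does `c c̄`, and the product is `e (c c̄) e (c c̄)⁻¹ = e² = exp X`.
Conversely, `(V, W) ∈ X^{2ℓ,0}_{YM}(G)` is the image of `(V, 1, 𝔯(W), e⁻¹ 𝔪(V), X)`,
because `𝔯` is an involution and `𝔪(𝔯(W)) = 𝔪(W)⁻¹ = e⁻² 𝔪(V)`.
-/

/-- Abstraction of a Lie group `G` with Lie algebra `𝔤`, exponential map `exp`,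
and adjoint representation `Ad`, satisfying the standard identities
`exp (Ad g X) = g * exp X * g⁻¹` and one-parameter subgroup additivity. -/
structure LieExpAd (G 𝔤 : Type*) [Group G] [TopologicalSpace G]
    [AddCommGroup 𝔤] [Module ℝ 𝔤] where
  exp : 𝔤 → G
  Ad : G →* (𝔤 ≃ₗ[ℝ] 𝔤)
  exp_Ad : ∀ (g : G) (X : 𝔤), exp (Ad g X) = g * exp X * g⁻¹
  exp_add_smul : ∀ (r s : ℝ) (X : 𝔤), exp ((r + s) • X) = exp (r • X) * exp (s • X)

variable {G 𝔤 : Type*} [Group G] [TopologicalSpace G] [IsTopologicalGroup G]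
  [AddCommGroup 𝔤] [Module ℝ 𝔤]

open scoped commutatorElement

/-- `𝔪(a₁,b₁,…,a_ℓ,b_ℓ) = ∏ᵢ [aᵢ,bᵢ]` (ordered product of commutators). -/
def mm {ℓ : ℕ} (V : Fin ℓ → G × G) : G :=
  (List.ofFn fun i => ⁅(V i).1, (V i).2⁆).prod

/-- `𝔯(a₁,b₁,…,a_ℓ,b_ℓ) = (b_ℓ,a_ℓ,…,b₁,a₁)`. -/
def rr {ℓ : ℕ} (V : Fin ℓ → G × G) : Fin ℓ → G × G :=
  fun i => ((V i.rev).2, (V i.rev).1)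

/-- Entrywise conjugation `g V g⁻¹` of a tuple. -/
def conjT {ℓ : ℕ} (g : G) (V : Fin ℓ → G × G) : Fin ℓ → G × G :=
  fun i => (g * (V i).1 * g⁻¹, g * (V i).2 * g⁻¹)

/-- The adjoint stabilizer `G_X = {g | Ad(g)X = X}`. -/
def stab (L : LieExpAd G 𝔤) (X : 𝔤) : Set G := {g | L.Ad g X = X}

/-- All entries of the tuple `V` lie in `G_X`. -/
def tupleStab (L : LieExpAd G 𝔤) (X : 𝔤) {ℓ : ℕ} (V : Fin ℓ → G × G) : Prop :=
  ∀ i, (V i).1 ∈ stab L X ∧ (V i).2 ∈ stab L X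

/-- Membership in the symmetric representation variety `Z^{ℓ,1}_{YM}(G)`. -/
def memZ1 (L : LieExpAd G 𝔤) {ℓ : ℕ} (V : Fin ℓ → G × G) (c : G)
    (Vb : Fin ℓ → G × G) (cb : G) (X : 𝔤) : Prop :=
  tupleStab L X V ∧ tupleStab L X (conjT c Vb) ∧
  mm V = L.exp ((1/2 : ℝ) • X) * (c * cb) ∧
  mm Vb = cb * L.exp (-((1/2 : ℝ) • X)) * c

/-- Membership in the symmetric representation variety `Z^{ℓ,2}_{YM}(G)`. -/
def memZ2 (L : LieExpAd G 𝔤) {ℓ : ℕ} (V : Fin ℓ → G × G) (d c : G)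
    (Vb : Fin ℓ → G × G) (db cb : G) (X : 𝔤) : Prop :=
  tupleStab L X V ∧ tupleStab L X (conjT (d⁻¹ * c) Vb) ∧
  d⁻¹ ∈ stab L X ∧ c * cb ∈ stab L X ∧
  mm V = L.exp ((1/2 : ℝ) • X) * (c * db * c⁻¹ * d) ∧
  mm Vb = cb * d * L.exp (-((1/2 : ℝ) • X)) * cb⁻¹ * db

/-- The set `Z^{ℓ,1}_{YM}(G)`. -/
def Z1set (L : LieExpAd G 𝔤) (ℓ : ℕ) :
    Set ((Fin ℓ → G × G) × G × (Fin ℓ → G × G) × G × 𝔤) :=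
  {z | memZ1 L z.1 z.2.1 z.2.2.1 z.2.2.2.1 z.2.2.2.2}

/-- The Yang–Mills representation variety `X^{n,0}_{YM}(G)` (here `n` pairs,
i.e. `G^{2n}`), `{(W,X) | W ∈ (G_X)^{2n}, 𝔪(W) = exp X}`. -/
def XymSet (L : LieExpAd G 𝔤) (n : ℕ) : Set ((Fin n → G × G) × 𝔤) :=
  {w | tupleStab L w.2 w.1 ∧ mm w.1 = L.exp w.2}

section Words

omit [TopologicalSpace G] [IsTopologicalGroup G]

variable {ℓ : ℕ}

theorem List.ofFn_comp_rev {α : Type*} {n : ℕ} (f : Fin n → α) :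
    List.ofFn (fun i => f i.rev) = (List.ofFn f).reverse := by
  rw [List.ofFn_eq_map, List.ofFn_eq_map, ← List.map_reverse, List.finRange_reverse,
    List.map_map]
  rfl

theorem mm_append {m : ℕ} (V : Fin ℓ → G × G) (W : Fin m → G × G) :
    mm (Fin.append V W) = mm V * mm W := by
  simp [mm, List.ofFn_add, Fin.append_right]

theorem mm_conjT (c : G) (V : Fin ℓ → G × G) : mm (conjT c V) = c * mm V * c⁻¹ := by
  simp only [mm, conjT]
  rw [← MulAut.conj_apply, map_list_prod, List.map_ofFn]
  congr 2
  funext i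
  simp [map_commutatorElement]

theorem mm_rr (V : Fin ℓ → G × G) : mm (rr V) = (mm V)⁻¹ := by
  have hterm : (fun i => ⁅(rr V i).1, (rr V i).2⁆) = fun i => ⁅(V i.rev).1, (V i.rev).2⁆⁻¹ := by
    funext i
    exact (commutatorElement_inv _ _).symm
  rw [mm, mm, hterm, List.ofFn_comp_rev fun i => ⁅(V i).1, (V i).2⁆⁻¹, List.prod_inv_reverse,
    List.map_ofFn]
  rfl

omit [Group G] in
theorem rr_rr (V : Fin ℓ → G × G) : rr (rr V) = V := by
  funext i
  simp [rr]

theorem conjT_one (V : Fin ℓ → G × G) : conjT 1 V = V := by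
  funext i
  simp [conjT]

theorem conjT_rr (c : G) (V : Fin ℓ → G × G) : conjT c (rr V) = rr (conjT c V) := rfl

theorem mm_mem {H : Subgroup G} {V : Fin ℓ → G × G} (hV : ∀ i, (V i).1 ∈ H ∧ (V i).2 ∈ H) :
    mm V ∈ H := by
  refine H.list_prod_mem fun g hg => ?_
  obtain ⟨i, rfl⟩ := List.mem_ofFn.mp hg
  rw [commutatorElement_def]
  have ⟨ha, hb⟩ := hV i
  exact H.mul_mem (H.mul_mem (H.mul_mem ha hb) (H.inv_mem ha)) (H.inv_mem hb)

end Words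

namespace LieExpAd

omit [IsTopologicalGroup G]

variable (L : LieExpAd G 𝔤)

theorem exp_zero : L.exp 0 = 1 := by
  simpa using L.exp_add_smul 0 0 0

theorem exp_neg (Y : 𝔤) : L.exp (-Y) = (L.exp Y)⁻¹ := by
  rw [eq_inv_iff_mul_eq_one, ← one_smul ℝ Y, ← neg_smul, ← L.exp_add_smul]
  simp [exp_zero]

theorem exp_half_mul_exp_half (X : 𝔤) :
    L.exp ((1 / 2 : ℝ) • X) * L.exp ((1 / 2 : ℝ) • X) = L.exp X := by
  rw [← L.exp_add_smul]
  norm_num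

def stabilizer (X : 𝔤) : Subgroup G := (MulAction.stabilizer (𝔤 ≃ₗ[ℝ] 𝔤) X).comap L.Ad

theorem commute_exp_smul {X : 𝔤} {g : G} (hg : g ∈ stab L X) (r : ℝ) :
    Commute g (L.exp (r • X)) := by
  have hconj := L.exp_Ad g (r • X)
  rw [map_smul, show L.Ad g X = X from hg] at hconj
  exact (eq_mul_inv_iff_mul_eq.mp hconj).symm

end LieExpAd

section Stabilizer

omit [IsTopologicalGroup G]

variable {ℓ : ℕ} {L : LieExpAd G 𝔤} {X : 𝔤}

theorem tupleStab_append {m : ℕ} {V : Fin ℓ → G × G} {W : Fin m → G × G} :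
    tupleStab L X (Fin.append V W) ↔ tupleStab L X V ∧ tupleStab L X W := by
  simp only [tupleStab, Fin.forall_fin_add, Fin.append_left, Fin.append_right]

theorem tupleStab_rr {V : Fin ℓ → G × G} : tupleStab L X (rr V) ↔ tupleStab L X V :=
  ⟨fun h i => by simpa [rr, and_comm] using h i.rev, fun h i => (h i.rev).symm⟩

theorem mm_mem_stab {V : Fin ℓ → G × G} (hV : tupleStab L X V) : mm V ∈ stab L X :=
  mm_mem (H := L.stabilizer X) hV

theorem append_conjT_rr_mem_XymSet {V Vb : Fin ℓ → G × G} {c cb : G}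
    (h : memZ1 L V c Vb cb X) : (Fin.append V (conjT c (rr Vb)), X) ∈ XymSet L (ℓ + ℓ) := by
  obtain ⟨hV, hVb, hmV, hmVb⟩ := h
  rw [L.exp_neg] at hmVb
  set e := L.exp ((1 / 2 : ℝ) • X)
  have hcomm : Commute (c * cb) e := by
    rw [eq_inv_mul_of_mul_eq hmV.symm]
    exact (Commute.refl e).inv_left.mul_left (L.commute_exp_smul (mm_mem_stab hV) _)
  refine ⟨tupleStab_append.mpr ⟨hV, by rwa [conjT_rr, tupleStab_rr]⟩, ?_⟩
  change mm _ = L.exp X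
  rw [mm_append, mm_conjT, mm_rr, hmV, hmVb, ← L.exp_half_mul_exp_half X]
  calc e * (c * cb) * (c * (cb * e⁻¹ * c)⁻¹ * c⁻¹) = e * (c * cb * e) * (c * cb)⁻¹ := by group
    _ = e * e := by rw [hcomm.eq]; group

theorem memZ1_one_rr {V W : Fin ℓ → G × G} (h : (Fin.append V W, X) ∈ XymSet L (ℓ + ℓ)) :
    memZ1 L V 1 (rr W) ((L.exp ((1 / 2 : ℝ) • X))⁻¹ * mm V) X := by
  obtain ⟨hVW, hmVW⟩ := h
  obtain ⟨hV, hW⟩ := tupleStab_append.mp hVW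
  rw [mm_append, ← L.exp_half_mul_exp_half] at hmVW
  refine ⟨hV, by rwa [conjT_one, tupleStab_rr], by group, ?_⟩
  rw [mm_rr, L.exp_neg, eq_inv_mul_of_mul_eq hmVW]
  set e := L.exp ((1 / 2 : ℝ) • X)
  have hcomm : Commute (mm V) e⁻¹ := (L.commute_exp_smul (mm_mem_stab hV) _).inv_right
  calc ((mm V)⁻¹ * (e * e))⁻¹ = e⁻¹ * (e⁻¹ * mm V) := by group
    _ = e⁻¹ * (mm V * e⁻¹) := by rw [hcomm.eq]
    _ = e⁻¹ * mm V * e⁻¹ * 1 := by group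

end Stabilizer

theorem phi_image_eq_ym_general (L : LieExpAd G 𝔤) (ℓ : ℕ) :
    (fun z : (Fin ℓ → G × G) × G × (Fin ℓ → G × G) × G × 𝔤 =>
        ((Fin.append z.1 (conjT z.2.1 (rr z.2.2.1)), z.2.2.2.2) :
          (Fin (ℓ + ℓ) → G × G) × 𝔤)) '' Z1set L ℓ = XymSet L (ℓ + ℓ) := by
  ext ⟨W, X⟩
  constructor
  · rintro ⟨⟨V, c, Vb, cb, X⟩, hz, hWX⟩
    rw [← hWX]
    exact append_conjT_rr_mem_XymSet hz
  · intro hW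
    rw [← Fin.append_castAdd_natAdd (f := W)] at hW ⊢
    exact ⟨(_, 1, rr _, _, X), memZ1_one_rr hW, by simp [conjT_one, rr_rr]⟩

/-- `Φ(V,c,V̄,c̄,X) = (V, c·𝔯(V̄)·c⁻¹, X)` maps `Z^{ℓ,1}_{YM}(G)`
surjectively onto `X^{2ℓ,0}_{YM}(G)` (identifying `G^{2ℓ}×G^{2ℓ}` with `G^{4ℓ}`). -/
theorem phi_image_eq_ym [CompactSpace G] (L : LieExpAd G 𝔤) (ℓ : ℕ) :
    (fun z : (Fin ℓ → G × G) × G × (Fin ℓ → G × G) × G × 𝔤 =>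
        ((Fin.append z.1 (conjT z.2.1 (rr z.2.2.1)), z.2.2.2.2) :
          (Fin (ℓ + ℓ) → G × G) × 𝔤)) '' Z1set L ℓ = XymSet L (ℓ + ℓ) :=
  phi_image_eq_ym_general L ℓ
end

section
/- Let G be a compact Lie group with Lie algebra 𝔤. The map (V, d, c, X) ↦ (V, d, c, V, d, c, 2X) is a bijection from X^{ℓ,2}_{YM}(G) = {(V,d,c,X) ∈ G^{2ℓ}×G×G×𝔤 | V ∈ (G_X)^{2ℓ}, d ∈ G_X, Ad(c)(X) = -X, 𝔪(V) = exp(X)·c·d·c^{-1}·d} onto the fixed-point set of the involution τ(V,d,c,V̄,d̄,c̄,X) = (V̄,d̄,c̄,V,d,c,-Ad(c̄)X) in Z^{ℓ,2}_{YM}(G). -/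
variable {G 𝔤 : Type*} [Group G] [TopologicalSpace G] [IsTopologicalGroup G]
  [AddCommGroup 𝔤] [Module ℝ 𝔤]

open scoped commutatorElement

/-- The set `Z^{ℓ,2}_{YM}(G)`. -/
def Z2set (L : LieExpAd G 𝔤) (ℓ : ℕ) :
    Set ((Fin ℓ → G × G) × G × G × (Fin ℓ → G × G) × G × G × 𝔤) :=
  {z | memZ2 L z.1 z.2.1 z.2.2.1 z.2.2.2.1 z.2.2.2.2.1 z.2.2.2.2.2.1
    z.2.2.2.2.2.2}

/-- `τ(V,d,c,V̄,d̄,c̄,X) = (V̄,d̄,c̄,V,d,c,-Ad(c̄)X)`. -/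
def tau2 (L : LieExpAd G 𝔤) {ℓ : ℕ}
    (z : (Fin ℓ → G × G) × G × G × (Fin ℓ → G × G) × G × G × 𝔤) :
    (Fin ℓ → G × G) × G × G × (Fin ℓ → G × G) × G × G × 𝔤 :=
  (z.2.2.2.1, z.2.2.2.2.1, z.2.2.2.2.2.1, z.1, z.2.1, z.2.2.1,
    -(L.Ad z.2.2.2.2.2.1 z.2.2.2.2.2.2))

/-- The representation variety `X^{ℓ,2}_{YM}(G)`. -/
def X2set (L : LieExpAd G 𝔤) (ℓ : ℕ) : Set ((Fin ℓ → G × G) × G × G × 𝔤) :=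
  {w | tupleStab L w.2.2.2 w.1 ∧ w.2.1 ∈ stab L w.2.2.2 ∧
    L.Ad w.2.2.1 w.2.2.2 = -w.2.2.2 ∧
    mm w.1 = L.exp w.2.2.2 * (w.2.2.1 * w.2.1 * w.2.2.1⁻¹ * w.2.1)}

/-!
On the diagonal `V̄ = V`, `d̄ = d`, `c̄ = c`, a point of `Z^{ℓ,2}_{YM}(G)` is `τ`-fixed exactly when
`Ad(c)` reverses its `𝔤`-component `X`, and its first relation `𝔪(V) = exp(X/2)·c·d·c⁻¹·d` is the
defining relation of `X^{ℓ,2}_{YM}(G)` for `X/2`. The second relation is then automatic because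
`exp` intertwines `Ad` with conjugation: `d` commutes with `exp(-X/2)` and
`c·exp(-X/2) = exp(X/2)·c`. The stabilizer conditions match since `G_{rX} = G_X` for `r ≠ 0` and
conjugation by `d⁻¹c`, which reverses `X`, preserves `G_X`.
-/

section

variable {G 𝔤 : Type*} [Group G] [TopologicalSpace G] [AddCommGroup 𝔤] [Module ℝ 𝔤]
  (L : LieExpAd G 𝔤)

namespace LieExpAd

theorem Ad_mul_apply (g h : G) (X : 𝔤) : L.Ad (g * h) X = L.Ad g (L.Ad h X) := by
  rw [map_mul]; rfl

theorem Ad_inv_apply_of_apply_eq {g : G} {X Y : 𝔤} (h : L.Ad g X = Y) : L.Ad g⁻¹ Y = X := by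
  rw [← h, ← Ad_mul_apply, inv_mul_cancel, map_one]; rfl

theorem exp_Ad_mul (g : G) (X : 𝔤) : L.exp (L.Ad g X) * g = g * L.exp X := by
  rw [exp_Ad, inv_mul_cancel_right]

theorem commute_exp_of_mem_stab {g : G} {X : 𝔤} (hg : g ∈ stab L X) : Commute g (L.exp X) := by
  have := L.exp_Ad_mul g X
  rwa [show L.Ad g X = X from hg, eq_comm] at this

theorem exp_mul_of_Ad_eq_neg {c : G} {X : 𝔤} (hc : L.Ad c X = -X) :
    L.exp X * c = c * L.exp (-X) := by
  simpa only [map_neg, hc, neg_neg] using L.exp_Ad_mul c (-X)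

end LieExpAd

open LieExpAd

theorem stab_smul {r : ℝ} (hr : r ≠ 0) (X : 𝔤) : stab L (r • X) = stab L X := by
  ext g
  show L.Ad g (r • X) = r • X ↔ L.Ad g X = X
  rw [map_smul, smul_right_inj hr]

theorem stab_neg (X : 𝔤) : stab L (-X) = stab L X := by
  simpa only [neg_smul, one_smul] using stab_smul L (r := -1) (by norm_num) X

theorem inv_mem_stab_iff {g : G} {X : 𝔤} : g⁻¹ ∈ stab L X ↔ g ∈ stab L X :=
  ⟨fun h => inv_inv g ▸ L.Ad_inv_apply_of_apply_eq h, L.Ad_inv_apply_of_apply_eq⟩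

theorem conj_mem_stab {g a : G} {X Y : 𝔤} (hg : L.Ad g X = Y) (ha : a ∈ stab L X) :
    g * a * g⁻¹ ∈ stab L Y := by
  show L.Ad (g * a * g⁻¹) Y = Y
  rw [Ad_mul_apply, Ad_mul_apply, L.Ad_inv_apply_of_apply_eq hg, show L.Ad a X = X from ha, hg]

theorem tupleStab_smul {ℓ : ℕ} {r : ℝ} (hr : r ≠ 0) (X : 𝔤) (V : Fin ℓ → G × G) :
    tupleStab L (r • X) V ↔ tupleStab L X V := by
  simp only [tupleStab, stab_smul L hr]

theorem tupleStab_conjT {ℓ : ℕ} {g : G} {X Y : 𝔤} {V : Fin ℓ → G × G} (hg : L.Ad g X = Y)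
    (hV : tupleStab L X V) : tupleStab L Y (conjT g V) :=
  fun i => ⟨conj_mem_stab L hg (hV i).1, conj_mem_stab L hg (hV i).2⟩

theorem tau2_eq_self_iff {ℓ : ℕ} {V Vb : Fin ℓ → G × G} {d c db cb : G} {X : 𝔤} :
    tau2 L (V, d, c, Vb, db, cb, X) = (V, d, c, Vb, db, cb, X) ↔
      Vb = V ∧ db = d ∧ cb = c ∧ L.Ad c X = -X := by
  simp only [tau2, Prod.mk.injEq]
  constructor
  · rintro ⟨rfl, rfl, rfl, -, -, -, h⟩
    exact ⟨rfl, rfl, rfl, neg_eq_iff_eq_neg.mp h⟩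
  · rintro ⟨rfl, rfl, rfl, h⟩
    exact ⟨rfl, rfl, rfl, rfl, rfl, rfl, by rw [h, neg_neg]⟩

theorem memZ2_diag_of_mem_X2set {ℓ : ℕ} {V : Fin ℓ → G × G} {d c : G} {X : 𝔤}
    (h : (V, d, c, X) ∈ X2set L ℓ) : memZ2 L V d c V d c ((2 : ℝ) • X) := by
  obtain ⟨hV, hd, hc, hm⟩ := h
  dsimp only at hV hd hc hm
  have hdc : L.Ad (d⁻¹ * c) X = -X := by
    rw [Ad_mul_apply, hc, map_neg, L.Ad_inv_apply_of_apply_eq hd]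
  have hcc : c * c ∈ stab L X := by
    show L.Ad (c * c) X = X
    rw [Ad_mul_apply, hc, map_neg, hc, neg_neg]
  simp only [memZ2, tupleStab_smul L two_ne_zero, stab_smul L two_ne_zero, one_div,
    inv_smul_smul₀ (two_ne_zero' ℝ)]
  refine ⟨hV, ?_, (inv_mem_stab_iff L).2 hd, hcc, hm, ?_⟩
  · simpa only [tupleStab, stab_neg] using tupleStab_conjT L hdc hV
  · have hd' : d ∈ stab L (-X) := by rwa [stab_neg]
    calc mm V = L.exp X * c * d * c⁻¹ * d := by rw [hm]; group
      _ = c * L.exp (-X) * d * c⁻¹ * d := by rw [exp_mul_of_Ad_eq_neg L hc]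
      _ = c * d * L.exp (-X) * c⁻¹ * d := by
        rw [mul_assoc c, ← (L.commute_exp_of_mem_stab hd').eq]
        simp only [mul_assoc]

theorem mem_X2set_of_memZ2_diag {ℓ : ℕ} {V : Fin ℓ → G × G} {d c : G} {X : 𝔤}
    (hc : L.Ad c X = -X) (h : memZ2 L V d c V d c ((2 : ℝ) • X)) : (V, d, c, X) ∈ X2set L ℓ := by
  obtain ⟨hV, -, hd, -, hm, -⟩ := h
  rw [tupleStab_smul L two_ne_zero] at hV
  rw [stab_smul L two_ne_zero, inv_mem_stab_iff] at hd
  rw [one_div, inv_smul_smul₀ (two_ne_zero' ℝ)] at hm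
  exact ⟨hV, hd, hc, hm⟩

end

theorem X2_bij_fixed_general (L : LieExpAd G 𝔤) (ℓ : ℕ) :
    Set.BijOn
      (fun w : (Fin ℓ → G × G) × G × G × 𝔤 =>
        ((w.1, w.2.1, w.2.2.1, w.1, w.2.1, w.2.2.1, (2 : ℝ) • w.2.2.2) :
          (Fin ℓ → G × G) × G × G × (Fin ℓ → G × G) × G × G × 𝔤))
      (X2set L ℓ) {z ∈ Z2set L ℓ | tau2 L z = z} := by
  refine ⟨?_, ?_, ?_⟩
  · rintro ⟨V, d, c, X⟩ hw
    refine ⟨memZ2_diag_of_mem_X2set L hw, (tau2_eq_self_iff L).2 ⟨rfl, rfl, rfl, ?_⟩⟩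
    rw [map_smul, hw.2.2.1, smul_neg]
  · rintro ⟨V, d, c, X⟩ - ⟨V', d', c', X'⟩ - h
    simp only [Prod.mk.injEq, smul_right_inj (two_ne_zero' ℝ)] at h
    obtain ⟨rfl, rfl, rfl, -, -, -, rfl⟩ := h
    rfl
  · rintro ⟨V, d, c, Vb, db, cb, X⟩ ⟨hz, hτ⟩
    obtain ⟨rfl, rfl, rfl, hc⟩ := (tau2_eq_self_iff L).1 hτ
    have hX : (2 : ℝ) • (1 / 2 : ℝ) • X = X := by rw [one_div, smul_inv_smul₀ (two_ne_zero' ℝ)]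
    refine ⟨(Vb, db, cb, (1 / 2 : ℝ) • X), mem_X2set_of_memZ2_diag L ?_ ?_, by simp only [hX]⟩
    · rw [map_smul, hc, smul_neg]
    · rwa [hX]

/-- `(V,d,c,X) ↦ (V,d,c,V,d,c,2X)` is a bijection from
`X^{ℓ,2}_{YM}(G)` onto the fixed-point set of `τ` in `Z^{ℓ,2}_{YM}(G)`. -/
theorem X2_bij_fixed [CompactSpace G] (L : LieExpAd G 𝔤) (ℓ : ℕ) :
    Set.BijOn
      (fun w : (Fin ℓ → G × G) × G × G × 𝔤 =>
        ((w.1, w.2.1, w.2.2.1, w.1, w.2.1, w.2.2.1, (2 : ℝ) • w.2.2.2) :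
          (Fin ℓ → G × G) × G × G × (Fin ℓ → G × G) × G × G × 𝔤))
      (X2set L ℓ) {z ∈ Z2set L ℓ | tau2 L z = z} :=
  X2_bij_fixed_general L ℓ
end
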